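/- arXiv:1405.7633 — 11 statements merged into one kernel-verified Lean document; each statement's English description precedes it below -/
import Mathlib

section
/- Let G : ℝ → ℝ be measurable and let α > 0. Assume that the function t ↦ |G(t)|/(e^{αt} − 1) is integrable on (0, ∞). Then the series of Laplace transforms ∑'_{k=1}^∞ ∫₀^∞ e^{−αkt} G(t) dt converges and equals ∫₀^∞ G(t)/(e^{αt} − 1) dt. -/
open MeasureTheory Real Set

/-!
For `t > 0` the weights `e^{-αkt}`, `k ≥ 1`, form a geometric series with sum
`1 / (e^{αt} - 1)`.
Multiplied by `|G t|` they are dominated, termwise and in sum, by the integrable function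
`|G t| / (e^{αt} - 1)`, so dominated convergence for series lets us integrate term by term.
-/

theorem Real.hasSum_exp_neg_mul_succ {x : ℝ} (hx : 0 < x) :
    HasSum (fun k : ℕ => exp (-(x * (k + 1)))) (exp x - 1)⁻¹ := by
  have hr : exp (-x) < 1 := exp_lt_one_iff.mpr (neg_neg_of_pos hx)
  have hgeo := (hasSum_geometric_of_lt_one (exp_pos (-x)).le hr).mul_left (exp (-x))
  have hsum : exp (-x) * (1 - exp (-x))⁻¹ = (exp x - 1)⁻¹ := by
    have : exp x - 1 ≠ 0 := (sub_pos.mpr (one_lt_exp_iff.mpr hx)).ne'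
    rw [exp_neg]
    field_simp
  refine hsum ▸ hgeo.congr_fun fun k => ?_
  rw [← exp_nat_mul, ← exp_add]
  ring_nf

theorem MeasureTheory.hasSum_integral_smul_of_hasSum_weights {ι X E : Type*} [Countable ι]
    [MeasurableSpace X] {μ : Measure X} [NormedAddCommGroup E] [NormedSpace ℝ E]
    {w : ι → X → ℝ} {W : X → ℝ} {g : X → E} (hw : ∀ k, AEStronglyMeasurable (w k) μ)
    (hg : AEStronglyMeasurable g μ) (hw_nonneg : ∀ k, ∀ᵐ x ∂μ, 0 ≤ w k x)
    (hW : ∀ᵐ x ∂μ, HasSum (fun k => w k x) (W x))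
    (hint : Integrable (fun x => W x * ‖g x‖) μ) :
    HasSum (fun k => ∫ x, w k x • g x ∂μ) (∫ x, W x • g x ∂μ) := by
  refine hasSum_integral_of_dominated_convergence (fun k x => w k x * ‖g x‖)
    (fun k => (hw k).smul hg) (fun k => ?_) ?_ ?_ ?_
  · filter_upwards [hw_nonneg k] with x hx
    rw [norm_smul, norm_of_nonneg hx]
  · filter_upwards [hW] with x hx using (hx.mul_right _).summable
  · refine hint.congr ?_
    filter_upwards [hW] with x hx using (hx.mul_right _).tsum_eq.symm
  · filter_upwards [hW] with x hx using hx.smul_const _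

/-- The simple form: if `t ↦ |G t| / (e^{αt} - 1)` is integrable on `(0, ∞)`,
then the series of Laplace transforms `∑_{k≥1} ∫₀^∞ e^{-αkt} G(t) dt` converges
to `∫₀^∞ G(t)/(e^{αt} - 1) dt`. -/
theorem series_eq_integral_simple (G : ℝ → ℝ) (hG : Measurable G) (α : ℝ) (hα : 0 < α)
    (hint : IntegrableOn (fun t => |G t| / (Real.exp (α * t) - 1)) (Ioi 0)) :
    HasSum (fun k : ℕ => ∫ t in Ioi 0, Real.exp (-(α * (k + 1) * t)) * G t)
      (∫ t in Ioi 0, G t / (Real.exp (α * t) - 1)) := by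
  have hweights : ∀ᵐ t ∂volume.restrict (Ioi 0),
      HasSum (fun k : ℕ => exp (-(α * (k + 1) * t))) (exp (α * t) - 1)⁻¹ := by
    filter_upwards [ae_restrict_mem measurableSet_Ioi] with t ht
    convert hasSum_exp_neg_mul_succ (mul_pos hα ht) using 3
    ring
  have hw_meas (k : ℕ) : Measurable fun t : ℝ => exp (-(α * (k + 1) * t)) := by fun_prop
  have h := hasSum_integral_smul_of_hasSum_weights (fun k => (hw_meas k).aestronglyMeasurable)
    hG.aestronglyMeasurable (fun k => ae_of_all _ fun t => (exp_pos _).le) hweights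
    (by simpa only [IntegrableOn, norm_eq_abs, div_eq_inv_mul] using hint)
  simpa only [smul_eq_mul, div_eq_inv_mul, mul_comm _ (G _)] using h
end

section
/- Let G : ℝ → ℝ be measurable and let α > 0. Assume that the function t ↦ |G(t)|/(e^{αt} − 1) is integrable on (0, ∞). Then the alternating series ∑'_{k=1}^∞ (−1)^{k+1} ∫₀^∞ e^{−αkt} G(t) dt converges and equals ∫₀^∞ G(t)/(e^{αt} + 1) dt. -/
/-!
With `r = e^{-αt}` the `k`-th term is `∫ (-r)^k · r G`, and on `(0, ∞)` the geometric series
`∑ (-r)^k · r G` sums to `G / (e^{αt} + 1)`. Its terms are dominated by `r^k · r |G|`, whose sum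
`|G| / (e^{αt} - 1)` is integrable by hypothesis, so dominated convergence exchanges the sum
and the integral.
-/

open MeasureTheory Real Set

theorem hasSum_integral_geometric_mul {X 𝕜 : Type*} [MeasurableSpace X] {μ : Measure X}
    [NormedField 𝕜] [NormedSpace ℝ 𝕜] {r g : X → 𝕜}
    (hr : AEStronglyMeasurable r μ) (hg : AEStronglyMeasurable g μ)
    (hr_lt : ∀ᵐ x ∂μ, ‖r x‖ < 1) (hint : Integrable (fun x => ‖g x‖ / (1 - ‖r x‖)) μ) :
    HasSum (fun k : ℕ => ∫ x, r x ^ k * g x ∂μ) (∫ x, g x / (1 - r x) ∂μ) := by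
  refine hasSum_integral_of_dominated_convergence (fun k x => ‖r x‖ ^ k * ‖g x‖)
    (fun k => (hr.pow k).mul hg) (fun k => ae_of_all _ fun x => by simp [norm_mul, norm_pow])
    (hr_lt.mono fun x hx => (summable_geometric_of_lt_one (norm_nonneg _) hx).mul_right _)
    (hint.congr (hr_lt.mono fun x hx => ?_)) (hr_lt.mono fun x hx => ?_)
  · dsimp only
    rw [tsum_mul_right, tsum_geometric_of_lt_one (norm_nonneg _) hx, div_eq_inv_mul]
  · simpa only [div_eq_inv_mul] using (hasSum_geometric_of_norm_lt_one hx).mul_right (g x)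

lemma norm_neg_exp_neg_lt_one {x : ℝ} (hx : 0 < x) : ‖-exp (-x)‖ < 1 := by
  rw [norm_neg, norm_of_nonneg (exp_nonneg _), exp_lt_one_iff]
  linarith

lemma abs_div_exp_sub_one_eq (x c : ℝ) (hx : 0 < x) :
    |c| / (exp x - 1) = ‖exp (-x) * c‖ / (1 - ‖-exp (-x)‖) := by
  have : 1 < exp x := one_lt_exp_iff.mpr hx
  rw [norm_neg, norm_mul, norm_of_nonneg (exp_nonneg _), Real.norm_eq_abs, exp_neg]
  field_simp

lemma div_exp_add_one_eq (x c : ℝ) : c / (exp x + 1) = exp (-x) * c / (1 - -exp (-x)) := by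
  have := exp_pos x
  simp only [exp_neg, sub_neg_eq_add]
  field_simp

lemma exp_neg_mul_succ_mul (a t : ℝ) (k : ℕ) :
    exp (-(a * (k + 1) * t)) = exp (-(a * t)) ^ k * exp (-(a * t)) := by
  rw [← exp_nat_mul, ← exp_add]
  ring_nf

/-- Alternating series: `∑_{k≥1} (-1)^{k+1} ∫₀^∞ e^{-αkt} G(t) dt`
converges to `∫₀^∞ G(t)/(e^{αt} + 1) dt`. -/
theorem alternating_series_eq_integral (G : ℝ → ℝ) (hG : Measurable G) (α : ℝ) (hα : 0 < α)
    (hint : IntegrableOn (fun t => |G t| / (Real.exp (α * t) - 1)) (Ioi 0)) :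
    HasSum (fun k : ℕ => (-1 : ℝ) ^ k * ∫ t in Ioi 0, Real.exp (-(α * (k + 1) * t)) * G t)
      (∫ t in Ioi 0, G t / (Real.exp (α * t) + 1)) := by
  have hr_lt : ∀ᵐ t ∂volume.restrict (Ioi 0), ‖-exp (-(α * t))‖ < 1 :=
    (ae_restrict_iff' measurableSet_Ioi).mpr
      (ae_of_all _ fun t ht => norm_neg_exp_neg_lt_one (mul_pos hα ht))
  have hmajorant : IntegrableOn (fun t => ‖exp (-(α * t)) * G t‖ / (1 - ‖-exp (-(α * t))‖))
      (Ioi 0) :=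
    (integrableOn_congr_fun (fun t ht => abs_div_exp_sub_one_eq _ _ (mul_pos hα ht))
      measurableSet_Ioi).mp hint
  have hterm : ∀ k : ℕ, (-1 : ℝ) ^ k * ∫ t in Ioi 0, exp (-(α * (k + 1) * t)) * G t
      = ∫ t in Ioi 0, (-exp (-(α * t))) ^ k * (exp (-(α * t)) * G t) := fun k => by
    rw [← integral_const_mul]
    congr 1 with t
    rw [exp_neg_mul_succ_mul, neg_pow (exp _)]
    ring
  have hlimit : ∫ t in Ioi 0, G t / (exp (α * t) + 1)
      = ∫ t in Ioi 0, exp (-(α * t)) * G t / (1 - -exp (-(α * t))) :=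
    integral_congr_ae (ae_of_all _ fun t => div_exp_add_one_eq _ _)
  rw [funext hterm, hlimit]
  exact hasSum_integral_geometric_mul (by fun_prop) (by fun_prop) hr_lt hmajorant
end

section
/- Let G : ℝ → ℝ be integrable on (0, ∞), let α > 0 and let γ ∈ ℝ with |γ| > 1. Then the power-factor series ∑'_{k=1}^∞ γ^{−k} ∫₀^∞ e^{−αkt} G(t) dt converges and equals ∫₀^∞ G(t)/(γ e^{αt} − 1) dt. -/
open MeasureTheory Real Set

/-!
Since `|γ e^{αt}| ≥ |γ| > 1` for `t > 0`, the integrand expands as the geometric series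
`G(t)/(γ e^{αt} - 1) = ∑_{k≥1} (γ e^{αt})^{-k} G(t)`, whose `k`-th term has norm at most
`|γ|^{-k} |G(t)|`. These norms have summable integrals, so the series may be integrated
term by term.
-/

theorem hasSum_inv_pow_succ {K : Type*} [NormedField K] {x : K} (hx : 1 < ‖x‖) :
    HasSum (fun k : ℕ => x⁻¹ ^ (k + 1)) (x - 1)⁻¹ := by
  have hx0 : x ≠ 0 := norm_pos_iff.mp (one_pos.trans hx)
  have hgeom := (hasSum_geometric_of_norm_lt_one (ξ := x⁻¹)
    (by rw [norm_inv]; exact inv_lt_one_of_one_lt₀ hx)).mul_left x⁻¹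
  rwa [← mul_inv, mul_one_sub, mul_inv_cancel₀ hx0, ← funext fun k => pow_succ' x⁻¹ k] at hgeom

theorem zpow_neg_succ_mul_exp_eq_inv_pow (γ α t : ℝ) (k : ℕ) :
    γ ^ (-((k : ℤ) + 1)) * exp (-(α * (k + 1) * t)) = (γ * exp (α * t))⁻¹ ^ (k + 1) := by
  have hexp : exp (-(α * (k + 1) * t)) = (exp (α * t))⁻¹ ^ (k + 1) := by
    rw [← exp_neg, ← exp_nat_mul]
    push_cast
    ring_nf
  rw [hexp, mul_inv, mul_pow, inv_pow γ, ← zpow_natCast γ, ← zpow_neg]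
  push_cast
  ring

theorem hasSum_integral_of_norm_le_geometric {X E : Type*} [MeasurableSpace X] {μ : Measure X}
    [NormedAddCommGroup E] [NormedSpace ℝ E] [CompleteSpace E] {f : ℕ → X → E} {g : X → ℝ}
    {r : ℝ} (hf : ∀ k, AEStronglyMeasurable (f k) μ) (hg : Integrable g μ) (hr₀ : 0 ≤ r)
    (hr₁ : r < 1) (hfg : ∀ k, ∀ᵐ x ∂μ, ‖f k x‖ ≤ r ^ k * g x) :
    HasSum (fun k => ∫ x, f k x ∂μ) (∫ x, ∑' k, f k x ∂μ) := by
  have hgk : ∀ k, Integrable (fun x => r ^ k * g x) μ := fun k => hg.const_mul _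
  have hfk : ∀ k, Integrable (f k) μ := fun k => (hgk k).mono' (hf k) (hfg k)
  have hnorm : ∀ k, ∫ x, ‖f k x‖ ∂μ ≤ r ^ k * ∫ x, g x ∂μ := fun k => by
    rw [← integral_const_mul]
    exact integral_mono_ae (hfk k).norm (hgk k) (hfg k)
  refine hasSum_integral_of_summable_integral_norm hfk ?_
  exact ((summable_geometric_of_lt_one hr₀ hr₁).mul_right _).of_nonneg_of_le
    (fun k => integral_nonneg fun x => norm_nonneg _) hnorm

/-- Power factor series: for `|γ| > 1`, `∑_{k≥1} γ^{-k} ∫₀^∞ e^{-αkt} G(t) dt`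
converges to `∫₀^∞ G(t)/(γ e^{αt} - 1) dt`. -/
theorem power_factor_series_eq_integral (G : ℝ → ℝ) (hG : IntegrableOn G (Ioi 0))
    (α γ : ℝ) (hα : 0 < α) (hγ : 1 < |γ|) :
    HasSum (fun k : ℕ => γ ^ (-((k : ℤ) + 1)) * ∫ t in Ioi 0, Real.exp (-(α * (k + 1) * t)) * G t)
      (∫ t in Ioi 0, G t / (γ * Real.exp (α * t) - 1)) := by
  set F : ℕ → ℝ → ℝ := fun k t => (γ * exp (α * t))⁻¹ ^ (k + 1) * G t
  have habs : ∀ t ∈ Ioi (0 : ℝ), |γ| ≤ |γ * exp (α * t)| := fun t ht => by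
    rw [abs_mul, abs_of_pos (exp_pos _)]
    exact le_mul_of_one_le_right (abs_nonneg _) (one_le_exp (mul_pos hα ht).le)
  have hF_int : ∀ k, ∫ t in Ioi 0, F k t
      = γ ^ (-((k : ℤ) + 1)) * ∫ t in Ioi 0, exp (-(α * (k + 1) * t)) * G t := fun k => by
    simp only [F, ← zpow_neg_succ_mul_exp_eq_inv_pow, mul_assoc, integral_const_mul]
  have hF_sum : ∀ t ∈ Ioi (0 : ℝ), ∑' k, F k t = G t / (γ * exp (α * t) - 1) := fun t ht => by
    rw [div_eq_inv_mul]
    exact ((hasSum_inv_pow_succ (hγ.trans_le (habs t ht))).mul_right (G t)).tsum_eq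
  have hF_le : ∀ k, ∀ᵐ t ∂volume.restrict (Ioi 0), ‖F k t‖ ≤ |γ|⁻¹ ^ k * (|γ|⁻¹ * ‖G t‖) := by
    refine fun k => ae_restrict_of_forall_mem measurableSet_Ioi fun t ht => ?_
    rw [norm_mul, norm_pow, norm_inv, ← mul_assoc, ← pow_succ]
    gcongr
    exact habs t ht
  have hF_meas : ∀ k, AEStronglyMeasurable (F k) (volume.restrict (Ioi 0)) := fun k =>
    (by fun_prop : Measurable fun t => (γ * exp (α * t))⁻¹ ^ (k + 1)).aestronglyMeasurable.mul
      hG.aestronglyMeasurable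
  have hsum := hasSum_integral_of_norm_le_geometric hF_meas (hG.norm.const_mul _)
    (inv_nonneg.mpr (abs_nonneg _)) (inv_lt_one_of_one_lt₀ hγ) hF_le
  rwa [funext hF_int, setIntegral_congr_fun measurableSet_Ioi hF_sum] at hsum
end

section
/- Let G : ℝ → ℝ be measurable and let α > 0. Assume that the function t ↦ |G(t)|/(e^{αt} − 1)² is integrable on (0, ∞). Then the differentiated series ∑'_{k=1}^∞ k · ∫₀^∞ e^{−α(k+1)t} G(t) dt converges and equals ∫₀^∞ G(t)/(e^{αt} − 1)² dt. -/
open MeasureTheory Real Set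

/-! With `x = e^{-αt}` the weights `(k+1) x^{k+2}` sum to `x²/(1-x)² = 1/(e^{αt}-1)²`, so the
series of integrands converges pointwise on `(0, ∞)` to `G(t)/(e^{αt}-1)²`, and its series of
absolute values converges to the integrable `|G(t)|/(e^{αt}-1)²`; dominated convergence for
series then exchanges sum and integral. -/

theorem hasSum_succ_mul_pow_add_two {𝕜 : Type*} [NormedField 𝕜] [HasSummableGeomSeries 𝕜] {r : 𝕜}
    (hr : ‖r‖ < 1) : HasSum (fun n : ℕ => ((n : 𝕜) + 1) * r ^ (n + 2)) (r ^ 2 / (1 - r) ^ 2) := by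
  have h := (hasSum_choose_mul_geometric_of_norm_lt_one 1 hr).mul_left (r ^ 2)
  rw [mul_one_div] at h
  exact h.congr_fun fun n => by push_cast [Nat.choose_one_right]; ring

theorem hasSum_succ_mul_exp_neg_mul {y : ℝ} (hy : 0 < y) :
    HasSum (fun n : ℕ => ((n : ℝ) + 1) * exp (-((n + 2) * y))) ((exp y - 1) ^ 2)⁻¹ := by
  have hr : ‖exp (-y)‖ < 1 := by
    rw [norm_of_nonneg (exp_nonneg _), exp_lt_one_iff]; linarith
  have hy' : exp y - 1 ≠ 0 := (sub_pos.2 (one_lt_exp_iff.2 hy)).ne'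
  have hvalue : exp (-y) ^ 2 / (1 - exp (-y)) ^ 2 = ((exp y - 1) ^ 2)⁻¹ := by
    rw [exp_neg]; field_simp
  have h := hasSum_succ_mul_pow_add_two hr
  rw [hvalue] at h
  refine h.congr_fun fun n => ?_
  rw [← exp_nat_mul]; push_cast; ring_nf

theorem hasSum_integral_of_hasSum_norm {X E ι : Type*} [MeasurableSpace X] {μ : Measure X}
    [NormedAddCommGroup E] [NormedSpace ℝ E] [Countable ι] {F : ι → X → E} {f : X → E}
    {g : X → ℝ} (hF : ∀ n, AEStronglyMeasurable (F n) μ) (hg : Integrable g μ)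
    (hFf : ∀ᵐ x ∂μ, HasSum (fun n => F n x) (f x))
    (hFg : ∀ᵐ x ∂μ, HasSum (fun n => ‖F n x‖) (g x)) :
    HasSum (fun n => ∫ x, F n x ∂μ) (∫ x, f x ∂μ) :=
  hasSum_integral_of_dominated_convergence (fun n x => ‖F n x‖) hF
    (fun _ => ae_of_all _ fun _ => le_rfl) (hFg.mono fun _ hx => hx.summable)
    (hg.congr (hFg.mono fun _ hx => hx.tsum_eq.symm)) hFf

/-- Differentiated series: `∑_{k≥1} k ∫₀^∞ e^{-α(k+1)t} G(t) dt` converges to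
`∫₀^∞ G(t)/(e^{αt} - 1)² dt`. -/
theorem differentiated_series_eq_integral (G : ℝ → ℝ) (hG : Measurable G) (α : ℝ) (hα : 0 < α)
    (hint : IntegrableOn (fun t => |G t| / (Real.exp (α * t) - 1) ^ 2) (Ioi 0)) :
    HasSum (fun k : ℕ =>
        ((k : ℝ) + 1) * ∫ t in Ioi 0, Real.exp (-(α * ((k + 1) + 1) * t)) * G t)
      (∫ t in Ioi 0, G t / (Real.exp (α * t) - 1) ^ 2) := by
  have kernel : ∀ t, 0 < t → ∀ c : ℝ, HasSum
      (fun k : ℕ => ((k : ℝ) + 1) * (exp (-(α * ((k + 1) + 1) * t)) * c))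
      (c / (exp (α * t) - 1) ^ 2) := fun t ht c => by
    rw [div_eq_inv_mul]
    refine ((hasSum_succ_mul_exp_neg_mul (mul_pos hα ht)).mul_right c).congr_fun fun k => ?_
    ring_nf
  simp_rw [← integral_const_mul]
  refine hasSum_integral_of_hasSum_norm (fun _ => by fun_prop) hint ?_ ?_
  all_goals filter_upwards [ae_restrict_mem measurableSet_Ioi] with t ht
  · exact kernel t ht (G t)
  · refine (kernel t ht |G t|).congr_fun fun k => ?_
    rw [norm_mul, norm_mul, norm_of_nonneg (by positivity), norm_of_nonneg (exp_nonneg _),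
      norm_eq_abs]
end

section
/- Let G : ℝ → ℝ be measurable and let α > 0. Assume that the function t ↦ |G(t)| · |log(1 − e^{−αt})| is integrable on (0, ∞). Then the integrated alternating series ∑'_{k=1}^∞ (−1)^{k+1} (1/k) ∫₀^∞ e^{−αkt} G(t) dt converges and equals ∫₀^∞ G(t) · log(1 + e^{−αt}) dt. -/
open MeasureTheory Real Set

/-!
Expand `log (1 + u)` with `u = e^{-αt} ∈ (0, 1)` into its alternating power series and integrate
term by term. The series of absolute values is `∑ uᵏ⁺¹/(k+1) = -log (1 - u)`, so the hypothesis
is exactly a summable integrable majorant, and dominated convergence for series applies.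
-/

theorem Real.hasSum_alternating_pow_div_log_one_add {x : ℝ} (hx : |x| < 1) :
    HasSum (fun k : ℕ => (-1 : ℝ) ^ k * (1 / ((k : ℝ) + 1)) * x ^ (k + 1)) (log (1 + x)) := by
  have h := (hasSum_pow_div_log_of_abs_lt_one (x := -x) (by rwa [abs_neg])).neg
  rw [sub_neg_eq_add, neg_neg] at h
  refine h.congr_fun fun k => ?_
  rw [neg_pow, pow_succ]
  ring

theorem hasSum_integral_pow_mul_of_integrable_neg_log_one_sub {Ω : Type*} [MeasurableSpace Ω]
    {μ : Measure Ω} {u G : Ω → ℝ} (hu : AEStronglyMeasurable u μ) (hG : AEStronglyMeasurable G μ)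
    (hu_mem : ∀ᵐ t ∂μ, u t ∈ Ico 0 1) (hint : Integrable (fun t => |G t| * -log (1 - u t)) μ) :
    HasSum (fun k : ℕ => (-1 : ℝ) ^ k * (1 / ((k : ℝ) + 1)) * ∫ t, u t ^ (k + 1) * G t ∂μ)
      (∫ t, G t * log (1 + u t) ∂μ) := by
  have hu_abs : ∀ᵐ t ∂μ, |u t| < 1 := by
    filter_upwards [hu_mem] with t ht
    exact (abs_of_nonneg ht.1).trans_lt ht.2
  simp_rw [← integral_const_mul]
  refine hasSum_integral_of_dominated_convergence (fun k t => |G t| * (u t ^ (k + 1) / (k + 1)))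
    (fun k => ((hu.pow _).mul hG).const_mul _) (fun k => ?_) ?_ ?_ ?_
  · filter_upwards [hu_mem] with t ht
    refine le_of_eq ?_
    rw [norm_mul, norm_mul, norm_mul, norm_pow, norm_neg, norm_one, one_pow, one_mul,
      norm_pow, Real.norm_of_nonneg ht.1, Real.norm_of_nonneg (by positivity), Real.norm_eq_abs]
    ring
  · filter_upwards [hu_abs] with t ht
    exact (hasSum_pow_div_log_of_abs_lt_one ht).summable.mul_left _
  · refine hint.congr ?_
    filter_upwards [hu_abs] with t ht
    exact ((hasSum_pow_div_log_of_abs_lt_one ht).mul_left _).tsum_eq.symm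
  · filter_upwards [hu_abs] with t ht
    refine ((Real.hasSum_alternating_pow_div_log_one_add ht).mul_left (G t)).congr_fun fun k => ?_
    ring

/-- Integrated alternating series: `∑_{k≥1} (-1)^{k+1} (1/k) ∫₀^∞ e^{-αkt} G(t) dt`
converges to `∫₀^∞ G(t) log(1 + e^{-αt}) dt`. -/
theorem integrated_alt_series_eq_integral (G : ℝ → ℝ) (hG : Measurable G) (α : ℝ) (hα : 0 < α)
    (hint : IntegrableOn (fun t => |G t| * |Real.log (1 - Real.exp (-(α * t)))|) (Ioi 0)) :
    HasSum (fun k : ℕ =>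
        (-1 : ℝ) ^ k * (1 / ((k : ℝ) + 1)) * ∫ t in Ioi 0, Real.exp (-(α * (k + 1) * t)) * G t)
      (∫ t in Ioi 0, G t * Real.log (1 + Real.exp (-(α * t)))) := by
  have hexp_pow (k : ℕ) (t : ℝ) : exp (-(α * (k + 1) * t)) = exp (-(α * t)) ^ (k + 1) := by
    rw [← exp_nat_mul]
    congr 1
    push_cast
    ring
  have hexp_mem : ∀ᵐ t ∂volume.restrict (Ioi 0), exp (-(α * t)) ∈ Ico 0 1 := by
    filter_upwards [ae_restrict_mem measurableSet_Ioi] with t (ht : 0 < t)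
    exact ⟨(exp_pos _).le, Real.exp_lt_one_iff.mpr (by nlinarith)⟩
  simp_rw [hexp_pow]
  refine hasSum_integral_pow_mul_of_integrable_neg_log_one_sub (by fun_prop)
    hG.aestronglyMeasurable hexp_mem (hint.congr ?_)
  filter_upwards [hexp_mem] with t ht
  rw [abs_of_nonpos (log_nonpos (by linarith [ht.2]) (by linarith [ht.1]))]
end

section
/- Let G : ℝ → ℝ be measurable and let α, β be real numbers with α > β ≥ 0. Assume that the function t ↦ |G(t)|/(e^{αt} − e^{βt}) is integrable on (0, ∞). Then the series ∑'_{k=1}^∞ ∫₀^∞ e^{−(αk − β(k−1))t} G(t) dt converges and equals ∫₀^∞ G(t)/(e^{αt} − e^{βt}) dt. -/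
/-!
For `t > 0` the kernel `1 / (e^{αt} - e^{βt})` is the sum of the geometric series
`∑ₖ e^{-(α(k+1) - βk)t}` with nonnegative terms. Its partial sums times `|G|` are dominated by
the integrable `|G t| / (e^{αt} - e^{βt})`, so the series may be integrated term by term.
-/

open MeasureTheory Real Set

lemma hasSum_pow_div_pow_succ {x y : ℝ} (hy : 0 ≤ y) (hyx : y < x) :
    HasSum (fun k : ℕ => y ^ k / x ^ (k + 1)) (x - y)⁻¹ := by
  have hx : 0 < x := hy.trans_lt hyx
  have h := (hasSum_geometric_of_lt_one (div_nonneg hy hx.le)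
    ((div_lt_one hx).mpr hyx)).mul_left x⁻¹
  rw [show x⁻¹ * (1 - y / x)⁻¹ = (x - y)⁻¹ by field_simp] at h
  refine h.congr_fun fun k => ?_
  rw [div_pow, pow_succ]
  field_simp

/-- The product with the sum dominates every partial sum, which gives both the integrability of
the terms and the summability of their `L¹` norms. -/
lemma hasSum_integral_mul_of_hasSum {X : Type*} [MeasurableSpace X] {μ : Measure X}
    {f : ℕ → X → ℝ} {s g : X → ℝ} (hf : ∀ k, AEStronglyMeasurable (f k) μ)
    (hg : AEStronglyMeasurable g μ) (hf_nonneg : ∀ᵐ x ∂μ, ∀ k, 0 ≤ f k x)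
    (hf_sum : ∀ᵐ x ∂μ, HasSum (fun k => f k x) (s x))
    (hint : Integrable (fun x => s x * g x) μ) :
    HasSum (fun k => ∫ x, f k x * g x ∂μ) (∫ x, s x * g x ∂μ) := by
  have hpartial : ∀ n, ∀ᵐ x ∂μ, ∑ k ∈ Finset.range n, ‖f k x * g x‖ ≤ ‖s x * g x‖ := by
    intro n
    filter_upwards [hf_nonneg, hf_sum] with x hx_nonneg hx_sum
    simp only [norm_mul, ← Finset.sum_mul, Real.norm_eq_abs, abs_of_nonneg (hx_nonneg _),
      abs_of_nonneg (hx_sum.nonneg hx_nonneg)]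
    exact mul_le_mul_of_nonneg_right (sum_le_hasSum _ (fun k _ => hx_nonneg k) hx_sum)
      (abs_nonneg _)
  have hterm : ∀ k, Integrable (fun x => f k x * g x) μ := fun k =>
    hint.mono ((hf k).mul hg) <| by
      filter_upwards [hpartial (k + 1)] with x hx
      exact (Finset.single_le_sum (fun j _ => norm_nonneg (f j x * g x))
        (Finset.self_mem_range_succ k)).trans hx
  have hsummable : Summable fun k => ∫ x, ‖f k x * g x‖ ∂μ := by
    refine summable_of_sum_range_le (c := ∫ x, ‖s x * g x‖ ∂μ)
      (fun k => integral_nonneg fun x => norm_nonneg _) fun n => ?_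
    rw [← integral_finsetSum _ fun k _ => (hterm k).norm]
    exact integral_mono_ae (integrable_finsetSum _ fun k _ => (hterm k).norm) hint.norm
      (hpartial n)
  rw [integral_congr_ae (g := fun x => ∑' k, f k x * g x) ?_]
  · exact hasSum_integral_of_summable_integral_norm hterm hsummable
  filter_upwards [hf_sum] with x hx
  exact ((hx.mul_right (g x)).tsum_eq).symm

lemma hasSum_exp_neg_eq_inv_exp_sub_exp (α β t : ℝ) (hαβ : β < α) (ht : 0 < t) :
    HasSum (fun k : ℕ => exp (-((α * (k + 1) - β * k) * t)))
      (exp (α * t) - exp (β * t))⁻¹ := by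
  convert hasSum_pow_div_pow_succ (exp_pos (β * t)).le
    (exp_lt_exp.mpr (mul_lt_mul_of_pos_right hαβ ht)) using 2 with k
  rw [← exp_nat_mul, ← exp_nat_mul, div_eq_mul_inv, ← exp_neg, ← exp_add]
  push_cast
  ring_nf

theorem added_parameter_series_eq_integral_general (G : ℝ → ℝ) (hG : Measurable G) (α β : ℝ)
    (hαβ : β < α)
    (hint : IntegrableOn (fun t => |G t| / (Real.exp (α * t) - Real.exp (β * t))) (Ioi 0)) :
    HasSum (fun k : ℕ =>
        ∫ t in Ioi 0, Real.exp (-((α * (k + 1) - β * k) * t)) * G t)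
      (∫ t in Ioi 0, G t / (Real.exp (α * t) - Real.exp (β * t))) := by
  have hsum : ∀ᵐ t ∂volume.restrict (Ioi 0), HasSum
      (fun k : ℕ => exp (-((α * (k + 1) - β * k) * t))) (exp (α * t) - exp (β * t))⁻¹ := by
    filter_upwards [ae_restrict_mem measurableSet_Ioi] with t ht
    exact hasSum_exp_neg_eq_inv_exp_sub_exp α β t hαβ ht
  have hweighted : IntegrableOn (fun t => (exp (α * t) - exp (β * t))⁻¹ * G t) (Ioi 0) := by
    refine hint.mono' (by fun_prop) ?_
    filter_upwards [hsum] with t ht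
    rw [norm_mul, norm_inv, Real.norm_eq_abs, Real.norm_eq_abs,
      abs_of_nonneg (inv_nonneg.mp (ht.nonneg fun k => (exp_pos _).le)), inv_mul_eq_div]
  simp only [div_eq_inv_mul]
  exact hasSum_integral_mul_of_hasSum (fun k => by fun_prop) hG.aestronglyMeasurable
    (ae_of_all _ fun t k => (exp_pos _).le) hsum hweighted

/-- Added constant parameter series: for `α > β ≥ 0`,
`∑_{k≥1} ∫₀^∞ e^{-(αk - β(k-1))t} G(t) dt` converges to
`∫₀^∞ G(t)/(e^{αt} - e^{βt}) dt`. -/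
theorem added_parameter_series_eq_integral (G : ℝ → ℝ) (hG : Measurable G) (α β : ℝ)
    (hβ : 0 ≤ β) (hαβ : β < α)
    (hint : IntegrableOn (fun t => |G t| / (Real.exp (α * t) - Real.exp (β * t))) (Ioi 0)) :
    HasSum (fun k : ℕ =>
        ∫ t in Ioi 0, Real.exp (-((α * (k + 1) - β * k) * t)) * G t)
      (∫ t in Ioi 0, G t / (Real.exp (α * t) - Real.exp (β * t))) :=
  added_parameter_series_eq_integral_general G hG α β hαβ hint
end

section
/- Let G : ℝ → ℝ be measurable and let α > 0. Assume that the function t ↦ |G(t)|/(e^{αt} − e^{−αt}) is integrable on (0, ∞). Then the alternating odd-index series ∑'_{k=1}^∞ (−1)^{k+1} ∫₀^∞ e^{−α(2k−1)t} G(t) dt converges and equals ∫₀^∞ G(t)/(e^{αt} + e^{−αt}) dt. -/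
open MeasureTheory Real Set

/-!
Expand the kernels as geometric series in `e^{-2αt}`: for `t > 0`,
`1 / (e^{αt} + e^{-αt}) = ∑ (-1)^k e^{-α(2k+1)t}` and
`1 / (e^{αt} - e^{-αt}) = ∑ e^{-α(2k+1)t}`.
The second series, multiplied by `|G|`, dominates the first one multiplied by `G`, and its sum is
integrable by hypothesis, so the first series may be integrated termwise.
-/

lemma exp_neg_odd_mul (k : ℕ) (x : ℝ) :
    exp (-((2 * k + 1) * x)) = exp (-x) * exp (-(2 * x)) ^ k := by
  rw [← exp_nat_mul, ← exp_add]
  ring_nf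

lemma hasSum_exp_neg_odd_mul {x : ℝ} (hx : 0 < x) :
    HasSum (fun k : ℕ => exp (-((2 * k + 1) * x))) (exp x - exp (-x))⁻¹ := by
  have hq : exp (-(2 * x)) < 1 := exp_lt_one_iff.mpr (by linarith)
  have hden : exp x - exp (-x) = exp x * (1 - exp (-(2 * x))) := by
    rw [mul_sub, mul_one, ← exp_add]
    ring_nf
  simp_rw [exp_neg_odd_mul, hden, mul_inv, ← exp_neg]
  exact (hasSum_geometric_of_lt_one (exp_pos _).le hq).mul_left _

lemma hasSum_alternating_exp_neg_odd_mul {x : ℝ} (hx : 0 < x) :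
    HasSum (fun k : ℕ => (-1) ^ k * exp (-((2 * k + 1) * x))) (exp x + exp (-x))⁻¹ := by
  have hq : |-exp (-(2 * x))| < 1 := by
    rw [abs_neg, abs_exp]
    exact exp_lt_one_iff.mpr (by linarith)
  have hden : exp x + exp (-x) = exp x * (1 - -exp (-(2 * x))) := by
    rw [sub_neg_eq_add, mul_add, mul_one, ← exp_add]
    ring_nf
  have hterm (k : ℕ) :
      (-1) ^ k * exp (-((2 * k + 1) * x)) = exp (-x) * (-exp (-(2 * x))) ^ k := by
    rw [exp_neg_odd_mul, neg_pow]
    ring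
  simp_rw [hterm, hden, mul_inv, ← exp_neg]
  exact (hasSum_geometric_of_abs_lt_one hq).mul_left _

/-- Hyperbolic inverted cosine series: `∑_{k≥1} (-1)^{k+1} ∫₀^∞ e^{-α(2k-1)t} G(t) dt`
converges to `∫₀^∞ G(t)/(e^{αt} + e^{-αt}) dt`. -/
theorem alt_odd_index_series_eq_integral (G : ℝ → ℝ) (hG : Measurable G) (α : ℝ) (hα : 0 < α)
    (hint : IntegrableOn (fun t => |G t| / (Real.exp (α * t) - Real.exp (-(α * t)))) (Ioi 0)) :
    HasSum (fun k : ℕ =>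
        (-1 : ℝ) ^ k * ∫ t in Ioi 0, Real.exp (-(α * (2 * k + 1) * t)) * G t)
      (∫ t in Ioi 0, G t / (Real.exp (α * t) + Real.exp (-(α * t)))) := by
  have hrearrange (k : ℕ) (t : ℝ) : α * (2 * k + 1) * t = (2 * k + 1) * (α * t) := by ring
  have hdom : ∀ t ∈ Ioi (0 : ℝ), HasSum (fun k : ℕ => exp (-(α * (2 * k + 1) * t)) * |G t|)
      (|G t| / (exp (α * t) - exp (-(α * t)))) := fun t ht => by
    simp_rw [hrearrange, div_eq_inv_mul]
    exact (hasSum_exp_neg_odd_mul (mul_pos hα ht)).mul_right _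
  have hlim : ∀ t ∈ Ioi (0 : ℝ),
      HasSum (fun k : ℕ => (-1) ^ k * (exp (-(α * (2 * k + 1) * t)) * G t))
        (G t / (exp (α * t) + exp (-(α * t)))) := fun t ht => by
    have h := (hasSum_alternating_exp_neg_odd_mul (mul_pos hα ht)).mul_right (G t)
    simp_rw [mul_assoc, ← hrearrange] at h
    rwa [div_eq_inv_mul]
  have hseries := hasSum_integral_of_dominated_convergence (μ := volume.restrict (Ioi 0))
    (F := fun (k : ℕ) t => (-1 : ℝ) ^ k * (exp (-(α * (2 * k + 1) * t)) * G t))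
    (fun (k : ℕ) t => exp (-(α * (2 * k + 1) * t)) * |G t|)
    (fun k => by fun_prop)
    (fun k => ae_of_all _ fun t => by simp)
    (ae_restrict_of_forall_mem measurableSet_Ioi fun t ht => (hdom t ht).summable)
    (hint.congr_fun (fun t ht => (hdom t ht).tsum_eq.symm) measurableSet_Ioi)
    (ae_restrict_of_forall_mem measurableSet_Ioi hlim)
  simpa only [integral_const_mul] using hseries
end

section
/- Let G : ℝ → ℝ be measurable and let α > 0. Assume that the function t ↦ |G(t)|/√(1 − e^{−αt}) is integrable on (0, ∞). Then the series ∑'_{n=1}^∞ (Nat.choose (2n) n / 4^n) ∫₀^∞ e^{−αnt} G(t) dt converges, and ∫₀^∞ G(t)/√(1 − e^{−αt}) dt = ∫₀^∞ G(t) dt + ∑'_{n=1}^∞ (Nat.choose (2n) n / 4^n) ∫₀^∞ e^{−αnt} G(t) dt. -/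
/-!
For `0 ≤ x < 1` the binomial series `(1 - x)^{-1/2} = ∑ C(2n,n)/4^n xⁿ` has nonnegative
coefficients. Put `x = e^{-αt}`, multiply by `G t` and integrate term by term: dominated
convergence applies because the series of absolute values sums to `|G t| / √(1 - e^{-αt})`,
which is integrable by hypothesis. The term `n = 0` is `∫ G`.
-/

open MeasureTheory Real Set

theorem ascPochhammer_eval_one_half (n : ℕ) :
    (ascPochhammer ℝ n).eval (1 / 2 : ℝ) = n.factorial * n.centralBinom / 4 ^ n := by
  induction n with
  | zero => simp
  | succ n ih =>
    have h : ((n + 1 : ℕ) : ℝ) * (n + 1).centralBinom = 2 * (2 * n + 1) * n.centralBinom := by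
      exact_mod_cast Nat.succ_mul_centralBinom_succ n
    rw [ascPochhammer_succ_eval, ih, Nat.factorial_succ, pow_succ]
    push_cast at h ⊢
    field_simp
    linear_combination (-2) * h

theorem Ring.multichoose_one_half (n : ℕ) :
    Ring.multichoose (1 / 2 : ℝ) n = n.centralBinom / 4 ^ n := by
  have h := Ring.factorial_nsmul_multichoose_eq_ascPochhammer (1 / 2 : ℝ) n
  rw [Polynomial.ascPochhammer_smeval_eq_eval, ascPochhammer_eval_one_half, nsmul_eq_mul] at h
  have : (n.factorial : ℝ) ≠ 0 := by positivity
  field_simp at h ⊢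
  linear_combination h

theorem hasSum_centralBinom_div_four_pow_mul_pow {x : ℝ} (hx : |x| < 1) :
    HasSum (fun n : ℕ => n.centralBinom / 4 ^ n * x ^ n) (1 / √(1 - x)) := by
  have h := (one_div_one_sub_rpow_hasFPowerSeriesOnBall_zero (1 / 2)).hasSum (y := x)
    (mem_eball_zero_iff.mpr (by rwa [← ofReal_norm, Real.norm_eq_abs, ENNReal.ofReal_lt_one]))
  rw [FormalMultilinearSeries.ofScalars_apply_eq'] at h
  simp_rw [← Ring.multichoose_eq, Ring.multichoose_one_half, smul_eq_mul, zero_add] at h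
  rwa [Real.sqrt_eq_rpow]

theorem hasSum_integral_mul_of_hasSum_of_nonneg {X : Type*} [MeasurableSpace X] {μ : Measure X}
    {k : ℕ → X → ℝ} {K G : X → ℝ} (hk_meas : ∀ n, AEStronglyMeasurable (k n) μ)
    (hG : AEStronglyMeasurable G μ) (hk_nonneg : ∀ n, ∀ᵐ x ∂μ, 0 ≤ k n x)
    (hk : ∀ᵐ x ∂μ, HasSum (fun n => k n x) (K x)) (hKG : Integrable (fun x => K x * |G x|) μ) :
    HasSum (fun n => ∫ x, k n x * G x ∂μ) (∫ x, K x * G x ∂μ) := by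
  refine hasSum_integral_of_dominated_convergence (fun n x => k n x * |G x|)
    (fun n => (hk_meas n).mul hG) (fun n => ?_) ?_ ?_ ?_
  · filter_upwards [hk_nonneg n] with x hx
    rw [norm_mul, Real.norm_of_nonneg hx, Real.norm_eq_abs]
  · filter_upwards [hk] with x hx using (hx.mul_right _).summable
  · refine hKG.congr ?_
    filter_upwards [hk] with x hx using (hx.mul_right _).tsum_eq.symm
  · filter_upwards [hk] with x hx using hx.mul_right _

theorem hasSum_integral_exp_mul_div_sqrt {G : ℝ → ℝ}
    (hG : AEStronglyMeasurable G (volume.restrict (Ioi 0))) {α : ℝ} (hα : 0 < α)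
    (hint : IntegrableOn (fun t => |G t| / √(1 - exp (-(α * t)))) (Ioi 0)) :
    HasSum (fun n : ℕ => n.centralBinom / 4 ^ n * ∫ t in Ioi 0, exp (-(α * n * t)) * G t)
      (∫ t in Ioi 0, G t / √(1 - exp (-(α * t)))) := by
  have hkernel : ∀ t ∈ Ioi (0 : ℝ), HasSum
      (fun n : ℕ => n.centralBinom / 4 ^ n * exp (-(α * n * t))) (1 / √(1 - exp (-(α * t)))) := by
    intro t ht
    have hx : |exp (-(α * t))| < 1 := by
      rw [abs_of_pos (exp_pos _), exp_lt_one_iff]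
      nlinarith [mul_pos hα ht]
    convert hasSum_centralBinom_div_four_pow_mul_pow hx using 2 with n
    rw [← exp_nat_mul]
    ring_nf
  simp_rw [← integral_const_mul, ← mul_assoc, div_eq_inv_mul (G _), ← one_div]
  refine hasSum_integral_mul_of_hasSum_of_nonneg (fun n => by fun_prop) hG
    (fun n => ae_of_all _ fun t => by positivity)
    (ae_restrict_of_forall_mem measurableSet_Ioi hkernel) ?_
  simpa only [one_div_mul_eq_div] using hint.integrable

/-- Square root series: the series `∑_{n≥1} (C(2n,n)/4^n) ∫₀^∞ e^{-αnt} G(t) dt`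
converges, and `∫₀^∞ G(t)/√(1-e^{-αt}) dt = ∫₀^∞ G(t) dt + ∑_{n≥1} (C(2n,n)/4^n) g(αn)`. -/
theorem sqrt_series_eq_integral (G : ℝ → ℝ) (hG : Measurable G) (α : ℝ) (hα : 0 < α)
    (hint : IntegrableOn (fun t => |G t| / Real.sqrt (1 - Real.exp (-(α * t)))) (Ioi 0)) :
    Summable (fun n : ℕ =>
        ((Nat.choose (2 * (n + 1)) (n + 1) : ℝ) / 4 ^ (n + 1)) *
          ∫ t in Ioi 0, Real.exp (-(α * (n + 1) * t)) * G t) ∧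
    ∫ t in Ioi 0, G t / Real.sqrt (1 - Real.exp (-(α * t)))
      = (∫ t in Ioi 0, G t) + ∑' n : ℕ,
          ((Nat.choose (2 * (n + 1)) (n + 1) : ℝ) / 4 ^ (n + 1)) *
            ∫ t in Ioi 0, Real.exp (-(α * (n + 1) * t)) * G t := by
  have h := (hasSum_nat_add_iff' 1).mpr
    (hasSum_integral_exp_mul_div_sqrt hG.aestronglyMeasurable hα hint)
  simp only [Nat.centralBinom_eq_two_mul_choose, Nat.cast_add_one] at h
  exact ⟨h.summable, by rw [h.tsum_eq]; simp⟩
end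

section
/- Let G : ℝ → ℝ be integrable on (0, ∞) and let α > 0. Then the series ∑'_{k=1}^∞ ((−1)^k/k!) ∫₀^∞ e^{−αkt} G(t) dt converges, and ∫₀^∞ G(t) · exp(−e^{−αt}) dt = ∫₀^∞ G(t) dt + ∑'_{k=1}^∞ ((−1)^k/k!) ∫₀^∞ e^{−αkt} G(t) dt. -/
open MeasureTheory Real Set

/-!
Expand `exp (-e^{-αt})` in its exponential series. On `t > 0` we have `e^{-αt} ≤ 1`, so the
`n`-th term of the expanded integrand is bounded by `|G t| / n!`; these bounds sum to `e |G|`,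
which is integrable, and dominated convergence lets us integrate the series term by term.
-/

theorem hasSum_integral_exp_smul {X E : Type*} [MeasurableSpace X] {μ : Measure X}
    [NormedAddCommGroup E] [NormedSpace ℝ E] {f : X → E} {φ : X → ℝ} {C : ℝ}
    (hf : Integrable f μ) (hφ : AEStronglyMeasurable φ μ) (hφC : ∀ᵐ a ∂μ, |φ a| ≤ C) :
    HasSum (fun n : ℕ => ∫ a, (φ a ^ n / n.factorial) • f a ∂μ) (∫ a, exp (φ a) • f a ∂μ) := by
  refine hasSum_integral_of_dominated_convergence (fun n a => C ^ n / n.factorial * ‖f a‖)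
    (fun n => by have := hf.1; fun_prop) (fun n => ?_)
    (ae_of_all _ fun a => (summable_pow_div_factorial C).mul_right _) ?_
    (ae_of_all _ fun a => ?_)
  · filter_upwards [hφC] with a ha
    rw [norm_smul, norm_div, norm_pow, Real.norm_eq_abs, RCLike.norm_natCast]
    gcongr
  · have hexp := exp_eq_exp_ℝ ▸ NormedSpace.expSeries_div_hasSum_exp C
    simp only [tsum_mul_right, hexp.tsum_eq]
    exact hf.norm.const_mul _
  · exact (exp_eq_exp_ℝ ▸ NormedSpace.expSeries_div_hasSum_exp (φ a)).smul_const (f a)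

theorem setIntegral_neg_exp_pow_mul (G : ℝ → ℝ) (α : ℝ) (n : ℕ) (s : Set ℝ) :
    ∫ t in s, (-exp (-(α * t))) ^ n * G t = (-1) ^ n * ∫ t in s, exp (-(α * n * t)) * G t := by
  rw [← integral_const_mul]
  congr 1 with t
  rw [neg_pow, ← exp_nat_mul, mul_assoc]
  ring_nf

/-- Negative exponential series: the series `∑_{k≥1} ((-1)^k/k!) ∫₀^∞ e^{-αkt} G(t) dt`
converges, and `∫₀^∞ G(t) exp(-e^{-αt}) dt = ∫₀^∞ G(t) dt + ∑_{k≥1} ((-1)^k/k!) g(αk)`. -/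
theorem neg_exp_series_eq_integral (G : ℝ → ℝ) (hG : IntegrableOn G (Ioi 0)) (α : ℝ)
    (hα : 0 < α) :
    Summable (fun k : ℕ =>
        ((-1 : ℝ) ^ (k + 1) / (Nat.factorial (k + 1) : ℝ)) *
          ∫ t in Ioi 0, Real.exp (-(α * (k + 1) * t)) * G t) ∧
    ∫ t in Ioi 0, G t * Real.exp (-Real.exp (-(α * t)))
      = (∫ t in Ioi 0, G t) + ∑' k : ℕ,
          ((-1 : ℝ) ^ (k + 1) / (Nat.factorial (k + 1) : ℝ)) *
            ∫ t in Ioi 0, Real.exp (-(α * (k + 1) * t)) * G t := by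
  have hbound : ∀ᵐ t ∂volume.restrict (Ioi 0), |-exp (-(α * t))| ≤ 1 := by
    refine (ae_restrict_iff' measurableSet_Ioi).2 (ae_of_all _ fun t (ht : 0 < t) => ?_)
    rw [abs_neg, abs_of_pos (exp_pos _), exp_le_one_iff, neg_nonpos]
    positivity
  have hseries := hasSum_integral_exp_smul hG (by fun_prop) hbound
  simp only [smul_eq_mul, div_mul_eq_mul_div, integral_div, setIntegral_neg_exp_pow_mul] at hseries
  have htail := (hasSum_nat_add_iff' 1).2 hseries
  simp only [Finset.sum_range_one, Nat.cast_zero, mul_zero, zero_mul, neg_zero, exp_zero, one_mul,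
    pow_zero, Nat.factorial_zero, Nat.cast_one, div_one, Nat.cast_add] at htail
  simp only [div_mul_eq_mul_div, mul_comm (G _)]
  exact ⟨htail.summable, by rw [htail.tsum_eq]; ring⟩
end

section
/- Let a, β ∈ ℂ with |a| < 1 and Re(β) > 1. Then ∑'_{k=1}^∞ (a + k)^{−β} = ∑'_{n=0}^∞ (−1)^n a^n Γ(β + n) ζ(β + n) / (n! · Γ(β)), where both series converge absolutely, (a+k)^{−β} denotes the complex power, Γ is the complex Gamma function and ζ is the Riemann zeta function. -/
/-!
For `k ≥ 1` write `(a + k)^(-β) = k^(-β) (1 + a/k)^(-β)` and expand by the binomial series: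
`(a + k)^(-β) = ∑ₙ C(β + n - 1, n) (-a)^n k^(-(β + n))`, with `C(β + n - 1, n) = Γ(β + n) / (n! Γ(β))`.
The double series over `(n, k)` is dominated by `(∑ₙ |C(β + n - 1, n)| |a|^n) (∑ₖ k^(-Re β))`,
a product of two convergent series, so the order of summation may be swapped;
summing over `k` first turns `k^(-(β + n))` into `ζ(β + n)`.
-/

open Complex
open scoped Nat

namespace Complex

theorem choose_add_sub_one_eq_Gamma_div {z : ℂ} (hz : ∀ k : ℕ, z ≠ -k) (n : ℕ) :
    Ring.choose (z + n - 1) n = Gamma (z + n) / (n ! * Gamma z) := by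
  have h := Ring.factorial_nsmul_multichoose_eq_ascPochhammer z n
  rw [Polynomial.ascPochhammer_smeval_cast, Polynomial.ascPochhammer_smeval_eq_eval,
    ← Gamma_add_nat_div_Gamma_eq z hz, nsmul_eq_mul, Ring.multichoose_eq] at h
  rw [div_mul_eq_div_div_swap, ← h,
    mul_div_cancel_left₀ _ (by exact_mod_cast n.factorial_ne_zero)]

theorem hasSum_one_sub_cpow_neg (s : ℂ) {x : ℂ} (hx : ‖x‖ < 1) :
    HasSum (fun n : ℕ => Ring.choose (s + n - 1) n * x ^ n) ((1 - x) ^ (-s)) := by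
  have := (one_div_one_sub_cpow_hasFPowerSeriesOnBall_zero s).hasSum
    (y := x) (by simpa [← ofReal_norm] using hx)
  simpa [FormalMultilinearSeries.ofScalars_apply_eq, cpow_neg, mul_comm] using this

theorem summable_norm_choose_mul_pow (s : ℂ) {x : ℂ} (hx : ‖x‖ < 1) :
    Summable fun n : ℕ => ‖Ring.choose (s + n - 1) n * x ^ n‖ := by
  have hradius := (one_div_one_sub_cpow_hasFPowerSeriesOnBall_zero s).r_le
  have := FormalMultilinearSeries.summable_norm_apply _
    (Metric.eball_subset_eball hradius (by simpa [← ofReal_norm] using hx))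
  simpa [FormalMultilinearSeries.ofScalars_apply_eq, mul_comm] using this

theorem ofReal_mul_cpow {r : ℝ} (hr : 0 < r) (z s : ℂ) :
    ((r : ℂ) * z) ^ s = (r : ℂ) ^ s * z ^ s := by
  rcases eq_or_ne z 0 with rfl | hz
  · rcases eq_or_ne s 0 with rfl | hs
    · simp
    · simp [zero_cpow hs]
  have hr0 : (r : ℂ) ≠ 0 := ofReal_ne_zero.mpr hr.ne'
  rw [cpow_def_of_ne_zero (mul_ne_zero hr0 hz), cpow_def_of_ne_zero hr0, cpow_def_of_ne_zero hz,
    log_ofReal_mul hr hz, ← exp_add, ← add_mul, ofReal_log hr.le]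

theorem hasSum_add_ofReal_cpow_neg (s a : ℂ) {r : ℝ} (hr : ‖a‖ < r) :
    HasSum (fun n : ℕ => Ring.choose (s + n - 1) n * (-a) ^ n * (r : ℂ) ^ (-(s + n)))
      ((a + r) ^ (-s)) := by
  have hr0 : 0 < r := (norm_nonneg a).trans_lt hr
  have hrC : (r : ℂ) ≠ 0 := ofReal_ne_zero.mpr hr0.ne'
  have hx : ‖-a / r‖ < 1 := by
    rwa [norm_div, norm_neg, norm_real, Real.norm_of_nonneg hr0.le, div_lt_one hr0]
  have hsplit : a + r = r * (1 - -a / r) := by field_simp; ring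
  rw [hsplit, ofReal_mul_cpow hr0]
  refine ((hasSum_one_sub_cpow_neg s hx).mul_left ((r : ℂ) ^ (-s))).congr_fun fun n => ?_
  rw [neg_add, cpow_add _ _ hrC, cpow_neg _ (n : ℂ), cpow_natCast, div_pow]
  field_simp

theorem summable_norm_choose_mul_cpow_nat_add_one {s a : ℂ} (hs : 1 < s.re) (ha : ‖a‖ < 1) :
    Summable fun p : ℕ × ℕ =>
      ‖Ring.choose (s + p.1 - 1) p.1 * (-a) ^ p.1 * ((p.2 : ℂ) + 1) ^ (-(s + p.1))‖ := by
  have hcoeff := summable_norm_choose_mul_pow s (x := -a) (by rwa [norm_neg])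
  have hpseries : Summable fun k : ℕ => ((k + 1 : ℕ) : ℝ) ^ (-s.re) :=
    (summable_nat_add_iff 1).mpr (Real.summable_nat_rpow.mpr (by linarith))
  refine (hcoeff.mul_of_nonneg hpseries (fun _ => norm_nonneg _) fun _ => by positivity)
    |>.of_nonneg_of_le (fun _ => norm_nonneg _) fun ⟨n, k⟩ => ?_
  have hk : ((k : ℂ) + 1) = ((k + 1 : ℕ) : ℂ) := by push_cast; rfl
  rw [norm_mul, hk, norm_natCast_cpow_of_pos k.succ_pos]
  gcongr
  · exact_mod_cast k.succ_pos
  · simp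

end Complex

theorem Summable.prod_norm_tsum {β γ E : Type*} [NormedAddCommGroup E] [CompleteSpace E]
    {f : β × γ → E} (hf : Summable fun p => ‖f p‖) : Summable fun b => ‖∑' c, f (b, c)‖ :=
  hf.prod.of_nonneg_of_le (fun _ => norm_nonneg _) fun b =>
    norm_tsum_le_tsum_norm (hf.prod_factor b)

/-- Converting a fractional series to a power series: for `|a| < 1` and `Re β > 1`,
`∑_{k≥1} (a + k)^{-β} = ∑_{n≥0} (-1)^n a^n Γ(β+n) ζ(β+n) / (n! Γ(β))`,
both series converging absolutely. -/
theorem fractional_series_eq_power_series (a β : ℂ) (ha : ‖a‖ < 1)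
    (hβ : 1 < β.re) :
    Summable (fun k : ℕ => ‖(a + ((k : ℂ) + 1)) ^ (-β)‖) ∧
    Summable (fun n : ℕ => ‖(-1 : ℂ) ^ n * a ^ n * Complex.Gamma (β + n) *
        riemannZeta (β + n) / ((Nat.factorial n : ℂ) * Complex.Gamma β)‖) ∧
    ∑' k : ℕ, (a + ((k : ℂ) + 1)) ^ (-β)
      = ∑' n : ℕ, (-1 : ℂ) ^ n * a ^ n * Complex.Gamma (β + n) *
          riemannZeta (β + n) / ((Nat.factorial n : ℂ) * Complex.Gamma β) := by
  set F : ℕ × ℕ → ℂ := fun p =>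
    Ring.choose (β + p.1 - 1) p.1 * (-a) ^ p.1 * ((p.2 : ℂ) + 1) ^ (-(β + p.1))
  have hF : Summable fun p => ‖F p‖ := summable_norm_choose_mul_cpow_nat_add_one hβ ha
  have hrow (k : ℕ) : ∑' n, F (n, k) = (a + ((k : ℂ) + 1)) ^ (-β) := by
    have hk : ‖a‖ < (k + 1 : ℝ) := by linarith [k.cast_nonneg (α := ℝ)]
    simpa only [ofReal_add, ofReal_natCast, ofReal_one] using (hasSum_add_ofReal_cpow_neg β a hk).tsum_eq
  have hcol (n : ℕ) : ∑' k, F (n, k) = (-1 : ℂ) ^ n * a ^ n * Gamma (β + n) *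
      riemannZeta (β + n) / (n ! * Gamma β) := by
    have hβn : ∀ k : ℕ, β ≠ -k := fun k h => by
      rw [h, neg_re, natCast_re] at hβ
      linarith [k.cast_nonneg (α := ℝ)]
    have hre : 1 < (β + n).re := by
      rw [add_re, natCast_re]
      linarith [n.cast_nonneg (α := ℝ)]
    simp only [F, tsum_mul_left, zeta_eq_tsum_one_div_nat_add_one_cpow hre, cpow_neg, one_div,
      choose_add_sub_one_eq_Gamma_div hβn, neg_pow a]
    ring
  refine ⟨?_, ?_, ?_⟩
  · simpa only [Prod.swap_prod_mk, hrow] using hF.prod_symm.prod_norm_tsum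
  · simpa only [hcol] using hF.prod_norm_tsum
  · have hF' : Summable (Function.uncurry fun n k => F (n, k)) := hF.of_norm
    rw [← tsum_congr hrow, ← tsum_congr hcol, hF'.tsum_comm]
end

section
/- Let α be a real number with 0 < α < 2π. Then the partial sums ∑_{k=1}^{N} sin(αk)/k converge, as N → ∞, to (π − α)/2; that is, Tendsto (fun N => ∑_{k=1}^{N} sin(αk)/k) atTop (𝓝 ((π − α)/2)). -/
/-!
With `z = exp (iα)`, the series is the imaginary part of `∑ zᵏ/k`. Since `|z| = 1`, `z ≠ 1`, the
geometric partial sums of `z` are bounded, so this series converges by Dirichlet's test; by Abel's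
limit theorem its sum is the radial limit of `-log (1 - xz)` as `x → 1⁻`, i.e. `-log (1 - z)`.
Finally `1 - exp (iα) = 2 sin (α/2) · exp (i(α - π)/2)` with `sin (α/2) > 0`, so
`Im (-log (1 - z)) = -arg (1 - z) = (π - α)/2`.
-/

open Real Filter Topology Finset

lemma sum_Icc_one_eq_sum_range_succ {M : Type*} [AddCommMonoid M] {f : ℕ → M} (h0 : f 0 = 0)
    (N : ℕ) : ∑ k ∈ Icc 1 N, f k = ∑ k ∈ range (N + 1), f k := by
  rw [range_eq_Ico, sum_eq_sum_Ico_succ_bot N.succ_pos, h0, zero_add]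
  rfl

lemma norm_geom_sum_le_of_norm_le_one {𝕜 : Type*} [NormedField 𝕜] {z : 𝕜} (hz : ‖z‖ ≤ 1)
    (hz1 : z ≠ 1) (n : ℕ) : ‖∑ i ∈ range n, z ^ i‖ ≤ 2 / ‖1 - z‖ := by
  rw [← neg_sub, norm_neg, geom_sum_eq hz1, norm_div]
  gcongr
  calc ‖z ^ n - 1‖ ≤ ‖z ^ n‖ + ‖(1 : 𝕜)‖ := norm_sub_le _ _
    _ ≤ 2 := by rw [norm_pow, norm_one]; linarith [pow_le_one₀ (n := n) (norm_nonneg z) hz]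

/-- The `i = 0` term is `z ^ 0 / 0 = 0`. -/
lemma RCLike.cauchySeq_sum_range_pow_div {𝕜 : Type*} [RCLike 𝕜] {z : 𝕜} (hz : ‖z‖ ≤ 1)
    (hz1 : z ≠ 1) : CauchySeq fun n => ∑ i ∈ range n, z ^ i / i := by
  have hbound (n : ℕ) : ‖∑ i ∈ range n, z ^ (i + 1)‖ ≤ 2 / ‖1 - z‖ := by
    simp_rw [pow_succ', ← mul_sum, norm_mul]
    exact (mul_le_of_le_one_left (norm_nonneg _) hz).trans
      (norm_geom_sum_le_of_norm_le_one hz hz1 n)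
  have hanti : Antitone fun i : ℕ => 1 / ((i : ℝ) + 1) := fun a b hab => by
    dsimp only
    gcongr
  refine (cauchySeq_shift 1).mp ?_
  convert hanti.cauchySeq_series_mul_of_tendsto_zero_of_bounded
    tendsto_one_div_add_atTop_nhds_zero_nat hbound using 2 with n
  rw [sum_range_succ']
  simp only [Nat.cast_zero, div_zero, add_zero, RCLike.real_smul_eq_coe_mul]
  refine sum_congr rfl fun i _ => ?_
  push_cast
  ring

namespace Complex

lemma re_lt_one_of_norm_le_one {z : ℂ} (hz : ‖z‖ ≤ 1) (hz1 : z ≠ 1) : z.re < 1 := by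
  by_contra! h
  have hre : z.re = 1 := le_antisymm ((re_le_norm z).trans hz) h
  have him : z.im = 0 :=
    abs_re_eq_norm.mp (by rw [hre, abs_one]; linarith [re_le_norm z])
  exact hz1 (ext (by simpa using hre) (by simpa using him))

theorem tendsto_sum_range_pow_div {z : ℂ} (hz : ‖z‖ ≤ 1) (hz1 : z ≠ 1) :
    Tendsto (fun n => ∑ i ∈ range n, z ^ i / i) atTop (𝓝 (-log (1 - z))) := by
  obtain ⟨L, hL⟩ := cauchySeq_tendsto_of_complete (RCLike.cauchySeq_sum_range_pow_div hz hz1)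
  have hmem : 1 - z * 1 ∈ slitPlane := by
    left
    simp [re_lt_one_of_norm_le_one hz hz1]
  have hleft : (𝓝[<] (1 : ℝ)).map ofReal ≤ 𝓝 1 :=
    (continuous_ofReal.tendsto' 1 1 ofReal_one).mono_left nhdsWithin_le_nhds
  have hlog : Tendsto (fun w : ℂ => -log (1 - z * w)) ((𝓝[<] (1 : ℝ)).map ofReal)
      (𝓝 (-log (1 - z))) := by
    have hcont : ContinuousAt (fun w : ℂ => -log (1 - z * w)) 1 :=
      ((continuousAt_const.sub (continuousAt_const.mul continuousAt_id)).clog hmem).neg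
    simpa using hcont.tendsto.mono_left hleft
  have hseries : ∀ᶠ w in (𝓝[<] (1 : ℝ)).map ofReal,
      -log (1 - z * w) = ∑' n : ℕ, z ^ n / n * w ^ n := by
    refine eventually_map.mpr ?_
    filter_upwards [Ioo_mem_nhdsLT zero_lt_one] with x hx
    have hzx : ‖z * x‖ < 1 := by
      rw [norm_mul, norm_real, norm_of_nonneg hx.1.le]
      exact (mul_le_of_le_one_left hx.1.le hz).trans_lt hx.2
    refine ((hasSum_taylorSeries_neg_log hzx).congr_fun fun n => ?_).tsum_eq.symm
    ring
  rwa [tendsto_nhds_unique (tendsto_tsum_powerSeries_nhdsWithin_lt hL) (hlog.congr' hseries)] at hL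

lemma one_sub_exp_mul_I (θ : ℝ) :
    1 - exp (θ * I) = (2 * Real.sin (θ / 2) : ℝ) * exp (((θ - π) / 2 : ℝ) * I) := by
  have hrot : exp (((θ - π) / 2 : ℝ) * I) = -I * exp (θ / 2 * I) := by
    rw [show (((θ - π) / 2 : ℝ) : ℂ) * I = θ / 2 * I - π / 2 * I by push_cast; ring,
      exp_sub, exp_pi_div_two_mul_I, div_I, neg_mul, mul_comm]
  have hsplit : exp (θ * I) = exp (θ / 2 * I) * exp (θ / 2 * I) := by
    rw [← exp_add]
    ring_nf
  have hinv : exp (-(θ / 2) * I) * exp (θ / 2 * I) = 1 := by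
    rw [← exp_add, neg_mul, neg_add_cancel, exp_zero]
  rw [hrot, ofReal_mul, ofReal_sin, ofReal_ofNat, ofReal_div, ofReal_ofNat, two_sin, hsplit]
  linear_combination (-1 : ℂ) * hinv + (exp (-(θ / 2) * I) * exp (θ / 2 * I) -
    exp (θ / 2 * I) * exp (θ / 2 * I)) * I_mul_I

lemma exp_mul_I_ne_one {θ : ℝ} (h0 : 0 < θ) (h2π : θ < 2 * π) : exp (θ * I) ≠ 1 := by
  have hsin : 0 < Real.sin (θ / 2) := Real.sin_pos_of_pos_of_lt_pi (by linarith) (by linarith)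
  rw [ne_comm, ← sub_ne_zero, one_sub_exp_mul_I]
  exact mul_ne_zero (ofReal_ne_zero.mpr (by positivity)) (exp_ne_zero _)

lemma arg_one_sub_exp_mul_I {θ : ℝ} (h0 : 0 < θ) (h2π : θ < 2 * π) :
    arg (1 - exp (θ * I)) = (θ - π) / 2 := by
  have hsin : 0 < Real.sin (θ / 2) := Real.sin_pos_of_pos_of_lt_pi (by linarith) (by linarith)
  rw [one_sub_exp_mul_I, arg_real_mul _ (by positivity), arg_exp_mul_I, toIocMod_eq_self]
  constructor <;> linarith

lemma im_exp_mul_I_pow_div (θ : ℝ) (k : ℕ) :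
    (exp (θ * I) ^ k / k).im = Real.sin (θ * k) / k := by
  rw [div_natCast_im, ← exp_nat_mul, show (k : ℂ) * (θ * I) = (θ * k : ℝ) * I by push_cast; ring,
    exp_ofReal_mul_I_im]

end Complex

/-- For `0 < α < 2π`, the partial sums of `∑_{k≥1} sin(αk)/k` converge to `(π - α)/2`. -/
theorem sin_series_partial_sums_tendsto (α : ℝ) (h1 : 0 < α) (h2 : α < 2 * π) :
    Tendsto (fun N : ℕ => ∑ k ∈ Finset.Icc 1 N, Real.sin (α * k) / k)
      atTop (nhds ((π - α) / 2)) := by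
  have hlog := Complex.tendsto_sum_range_pow_div (Complex.norm_exp_ofReal_mul_I α).le
    (Complex.exp_mul_I_ne_one h1 h2)
  have him := (Complex.continuous_im.tendsto _).comp hlog
  rw [Complex.neg_im, Complex.log_im, Complex.arg_one_sub_exp_mul_I h1 h2,
    show -((α - π) / 2) = (π - α) / 2 by ring] at him
  refine ((tendsto_add_atTop_iff_nat 1).mpr him).congr fun N => ?_
  simp only [Function.comp_apply, Complex.im_sum, Complex.im_exp_mul_I_pow_div]
  exact (sum_Icc_one_eq_sum_range_succ (by simp) N).symm
end
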